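/- Let (A,B,R,σ) be a normalized context over a multi-adjoint frame whose conjunctors (of all frames) have no zero-divisors, and let (g,f) = (χ_X, χ_Y) ∈ FC. If g^↑ ≠ f_⊥, then there is no multi-adjoint concept ⟨g_0, f_0⟩ with ⟨g, g^↑⟩ ≺ ⟨g_0, f_0⟩ ≺ ⟨g_⊤, f_⊥⟩ in the concept lattice order (⟨g_1,f_1⟩ ⪯ ⟨g_2,f_2⟩ iff g_1 ⪯2 g_2). Dually, if f^↓ ≠ g_⊥, then there is no multi-adjoint concept ⟨g_0, f_0⟩ with ⟨g_⊥, f_⊤⟩ ≺ ⟨g_0, f_0⟩ ≺ ⟨f^↓, f⟩. -/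

import Mathlib

/-- An adjoint triple with respect to posets `P1`, `P2`, `P3`:
`x ≤ sdiv z y ↔ conj x y ≤ z ↔ y ≤ nwar z x`. -/
def IsAdjointTriple {P1 P2 P3 : Type*} [PartialOrder P1] [PartialOrder P2] [PartialOrder P3]
    (conj : P1 → P2 → P3) (sdiv : P3 → P2 → P1) (nwar : P3 → P1 → P2) : Prop :=
  ∀ (x : P1) (y : P2) (z : P3),
    (x ≤ sdiv z y ↔ conj x y ≤ z) ∧ (conj x y ≤ z ↔ y ≤ nwar z x)

/-- An operator between lower-bounded posets has no zero-divisors. -/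
def NoZD {Q1 Q2 Q3 : Type*} [Bot Q1] [Bot Q2] [Bot Q3] (conj : Q1 → Q2 → Q3) : Prop :=
  ∀ x y, conj x y = ⊥ → x = ⊥ ∨ y = ⊥

/-- Characteristic function of a set, valued in `{⊥, ⊤}`. -/
noncomputable def chi {α L : Type*} [Top L] [Bot L] (X : Set α) (a : α) : L := by
  classical exact if a ∈ X then ⊤ else ⊥

/-- Necessity operator `↑N : L2^B → L1^A` of the object-oriented frame. -/
def upN {A B L1 L2 P ιo : Type*} [CompleteLattice L1]
    (R : A → B → P) (sdivO : ιo → L2 → P → L1) (σo : A → B → ιo) (g : B → L2) : A → L1 :=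
  fun a => ⨅ b, sdivO (σo a b) (g b) (R a b)

/-- Necessity operator `↓N : L1^A → L2^B` of the property-oriented frame. -/
def downN {A B L1 L2 P ιp : Type*} [CompleteLattice L2]
    (R : A → B → P) (nwarP : ιp → L1 → P → L2) (σp : A → B → ιp) (f : A → L1) : B → L2 :=
  fun b => ⨅ a, nwarP (σp a b) (f a) (R a b)

/-- Concept-forming operator `↑ : L2^B → L1^A`. -/
def upOp {A B L1 L2 P ι : Type*} [CompleteLattice L1]
    (R : A → B → P) (sdiv : ι → P → L2 → L1) (σ : A → B → ι) (g : B → L2) : A → L1 :=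
  fun a => ⨅ b, sdiv (σ a b) (R a b) (g b)

/-- Concept-forming operator `↓ : L1^A → L2^B`. -/
def downOp {A B L1 L2 P ι : Type*} [CompleteLattice L2]
    (R : A → B → P) (nwar : ι → P → L1 → L2) (σ : A → B → ι) (f : A → L1) : B → L2 :=
  fun b => ⨅ a, nwar (σ a b) (R a b) (f a)

/-- `(χ_X, χ_Y)` belongs to the set `FC`, i.e. `∅ ≠ X ⊊ B`, `∅ ≠ Y ⊊ A`, and
`(χ_X, χ_Y) ∈ F_N` (that is, `(χ_X)^{↑N} = χ_Y` and `(χ_Y)^{↓N} = χ_X`). -/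
def MemFC {A B L1 L2 P ιp ιo : Type*} [CompleteLattice L1] [CompleteLattice L2]
    (R : A → B → P) (sdivO : ιo → L2 → P → L1) (σo : A → B → ιo)
    (nwarP : ιp → L1 → P → L2) (σp : A → B → ιp)
    (X : Set B) (Y : Set A) : Prop :=
  X ≠ ∅ ∧ X ≠ Set.univ ∧ Y ≠ ∅ ∧ Y ≠ Set.univ ∧
  upN R sdivO σo (chi X) = (chi Y : A → L1) ∧
  downN R nwarP σp (chi Y) = (chi X : B → L2)

/-- A context is normalized if every row and every column of `R` contains both a
`⊥` value and a non-`⊥` value. -/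
def Normalized {A B P : Type*} [Bot P] (R : A → B → P) : Prop :=
  (∀ a, (∃ b, R a b ≠ ⊥) ∧ (∃ b, R a b = ⊥)) ∧
  (∀ b, (∃ a, R a b ≠ ⊥) ∧ (∃ a, R a b = ⊥))

/-
Without zero-divisors, `⊥` values propagate through all four operators: if `R a b = ⊥` and
`f a ≠ ⊥` then `f^↓ b = ⊥`, and dually. So `(χ_X, χ_Y) ∈ FC` forces `R` to vanish on `Y × Xᶜ`
and on `Yᶜ × X`. If `χ_X < g₀` for a concept `⟨g₀, f₀⟩`, then `g₀` is nonzero at some `b₁ ∉ X`,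
so every `a` with `f₀ a ≠ ⊥` lies outside `Y`; but `g₀ = ⊤` on `X ≠ ∅` then needs `R a b ≠ ⊥`
for some `b ∈ X`. Hence `f₀ = ⊥` and `g₀ = ⊤`. If `⊥ < g₀ ≤ χ_Y^↓`, then `f₀ ≥ χ_Y` is nonzero
on `Y`, so a `b` with `g₀ b ≠ ⊥` lies in `X`, and then `f₀` vanishes off `Y`: `f₀ = χ_Y`.
-/

section Chi
variable {α L : Type*} [Top L] [Bot L] {X : Set α} {a : α}

@[simp] lemma chi_of_mem (h : a ∈ X) : (chi X a : L) = ⊤ := by simp [chi, h]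

@[simp] lemma chi_of_notMem (h : a ∉ X) : (chi X a : L) = ⊥ := by simp [chi, h]

end Chi

namespace IsAdjointTriple
variable {P1 P2 P3 : Type*} [PartialOrder P1] [PartialOrder P2] [PartialOrder P3]
  {conj : P1 → P2 → P3} {sdiv : P3 → P2 → P1} {nwar : P3 → P1 → P2}

lemma le_sdiv_iff_le_nwar (h : IsAdjointTriple conj sdiv nwar) {x : P1} {y : P2} {z : P3} :
    x ≤ sdiv z y ↔ y ≤ nwar z x :=
  (h x y z).1.trans (h x y z).2

lemma nwar_bot_right [OrderBot P1] [OrderTop P2] (h : IsAdjointTriple conj sdiv nwar) (z : P3) :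
    nwar z ⊥ = ⊤ :=
  top_le_iff.mp (h.le_sdiv_iff_le_nwar.mp bot_le)

variable [OrderBot P1] [OrderBot P2] [OrderBot P3]

lemma sdiv_bot_left (h : IsAdjointTriple conj sdiv nwar) (hz : NoZD conj) {y : P2}
    (hy : y ≠ ⊥) : sdiv ⊥ y = ⊥ :=
  (hz _ _ (le_bot_iff.mp (((h _ y ⊥).1).mp le_rfl))).resolve_right hy

lemma nwar_bot_left (h : IsAdjointTriple conj sdiv nwar) (hz : NoZD conj) {x : P1}
    (hx : x ≠ ⊥) : nwar ⊥ x = ⊥ :=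
  (hz _ _ (le_bot_iff.mp (((h x _ ⊥).2).mpr le_rfl))).resolve_left hx

end IsAdjointTriple

section Operators
variable {A B L1 L2 P ι : Type*} [CompleteLattice L1] [CompleteLattice L2] [PartialOrder P]
  {R : A → B → P} {σ : A → B → ι}

lemma le_upOp_iff_le_downOp {conj : ι → L1 → L2 → P} {sdiv : ι → P → L2 → L1}
    {nwar : ι → P → L1 → L2} (hMA : ∀ i, IsAdjointTriple (conj i) (sdiv i) (nwar i))
    {f : A → L1} {g : B → L2} :
    f ≤ upOp R sdiv σ g ↔ g ≤ downOp R nwar σ f := by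
  simp only [upOp, downOp, Pi.le_def, le_iInf_iff, (hMA _).le_sdiv_iff_le_nwar]
  exact forall_comm

lemma downOp_const_bot {conj : ι → L1 → L2 → P} {sdiv : ι → P → L2 → L1}
    {nwar : ι → P → L1 → L2} (hMA : ∀ i, IsAdjointTriple (conj i) (sdiv i) (nwar i)) :
    downOp R nwar σ (fun _ => ⊥) = fun _ => ⊤ := by
  funext b
  simp only [downOp, (hMA _).nwar_bot_right, iInf_top]

variable [OrderBot P]

lemma downOp_eq_bot_of_eq_bot {conj : ι → L1 → L2 → P} {sdiv : ι → P → L2 → L1}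
    {nwar : ι → P → L1 → L2} (hMA : ∀ i, IsAdjointTriple (conj i) (sdiv i) (nwar i))
    (hMAnzd : ∀ i, NoZD (conj i)) {f : A → L1} {a : A} {b : B} (hf : f a ≠ ⊥)
    (hR : R a b = ⊥) : downOp R nwar σ f b = ⊥ :=
  le_bot_iff.mp <| (iInf_le _ a).trans_eq <| by
    rw [hR, (hMA _).nwar_bot_left (hMAnzd _) hf]

lemma upOp_eq_bot_of_eq_bot {conj : ι → L1 → L2 → P} {sdiv : ι → P → L2 → L1}
    {nwar : ι → P → L1 → L2} (hMA : ∀ i, IsAdjointTriple (conj i) (sdiv i) (nwar i))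
    (hMAnzd : ∀ i, NoZD (conj i)) {g : B → L2} {a : A} {b : B} (hg : g b ≠ ⊥)
    (hR : R a b = ⊥) : upOp R sdiv σ g a = ⊥ :=
  le_bot_iff.mp <| (iInf_le _ b).trans_eq <| by
    rw [hR, (hMA _).sdiv_bot_left (hMAnzd _) hg]

end Operators

section Necessity
variable {A B L1 L2 P : Type*} [CompleteLattice L1] [CompleteLattice L2] [PartialOrder P]
  [OrderBot P] {R : A → B → P} {a : A} {b : B}

lemma upN_eq_bot_of_ne_bot {ιo : Type*} {conjO : ιo → L1 → P → L2} {sdivO : ιo → L2 → P → L1}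
    {nwarO : ιo → L2 → L1 → P} (hOO : ∀ k, IsAdjointTriple (conjO k) (sdivO k) (nwarO k))
    (hOOnzd : ∀ k, NoZD (conjO k)) {σo : A → B → ιo} {g : B → L2} (hg : g b = ⊥)
    (hR : R a b ≠ ⊥) : upN R sdivO σo g a = ⊥ :=
  le_bot_iff.mp <| (iInf_le _ b).trans_eq <| by
    rw [hg, (hOO _).sdiv_bot_left (hOOnzd _) hR]

lemma downN_eq_bot_of_ne_bot {ιp : Type*} {conjP : ιp → P → L2 → L1}
    {sdivP : ιp → L1 → L2 → P} {nwarP : ιp → L1 → P → L2}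
    (hPO : ∀ j, IsAdjointTriple (conjP j) (sdivP j) (nwarP j)) (hPOnzd : ∀ j, NoZD (conjP j))
    {σp : A → B → ιp} {f : A → L1} (hf : f a = ⊥) (hR : R a b ≠ ⊥) :
    downN R nwarP σp f b = ⊥ :=
  le_bot_iff.mp <| (iInf_le _ a).trans_eq <| by
    rw [hf, (hPO _).nwar_bot_left (hPOnzd _) hR]

end Necessity

namespace MemFC
variable {A B L1 L2 P ιp ιo : Type*} [CompleteLattice L1] [CompleteLattice L2] [PartialOrder P]
  [OrderBot P] {R : A → B → P} {σp : A → B → ιp} {σo : A → B → ιo}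
  {conjP : ιp → P → L2 → L1} {sdivP : ιp → L1 → L2 → P} {nwarP : ιp → L1 → P → L2}
  {conjO : ιo → L1 → P → L2} {sdivO : ιo → L2 → P → L1} {nwarO : ιo → L2 → L1 → P}
  {X : Set B} {Y : Set A} {a : A} {b : B}

lemma rel_eq_bot_of_mem_of_notMem [Nontrivial L1]
    (hOO : ∀ k, IsAdjointTriple (conjO k) (sdivO k) (nwarO k)) (hOOnzd : ∀ k, NoZD (conjO k))
    (hXY : MemFC (L1 := L1) (L2 := L2) R sdivO σo nwarP σp X Y) (ha : a ∈ Y) (hb : b ∉ X) :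
    R a b = ⊥ := by
  by_contra hR
  have h := upN_eq_bot_of_ne_bot hOO hOOnzd (σo := σo) (chi_of_notMem hb) hR
  rw [hXY.2.2.2.2.1, chi_of_mem ha] at h
  exact top_ne_bot h

lemma rel_eq_bot_of_notMem_of_mem [Nontrivial L2]
    (hPO : ∀ j, IsAdjointTriple (conjP j) (sdivP j) (nwarP j)) (hPOnzd : ∀ j, NoZD (conjP j))
    (hXY : MemFC (L1 := L1) (L2 := L2) R sdivO σo nwarP σp X Y) (ha : a ∉ Y) (hb : b ∈ X) :
    R a b = ⊥ := by
  by_contra hR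
  have h := downN_eq_bot_of_ne_bot hPO hPOnzd (σp := σp) (chi_of_notMem ha) hR
  rw [hXY.2.2.2.2.2, chi_of_mem hb] at h
  exact top_ne_bot h

variable {ι : Type*} {conj : ι → L1 → L2 → P} {sdiv : ι → P → L2 → L1} {nwar : ι → P → L1 → L2}
  {σ : A → B → ι} {g₀ : B → L2} {f₀ : A → L1}

lemma eq_top_of_chi_lt (hMA : ∀ i, IsAdjointTriple (conj i) (sdiv i) (nwar i))
    (hMAnzd : ∀ i, NoZD (conj i))
    (hPO : ∀ j, IsAdjointTriple (conjP j) (sdivP j) (nwarP j)) (hPOnzd : ∀ j, NoZD (conjP j))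
    (hOO : ∀ k, IsAdjointTriple (conjO k) (sdivO k) (nwarO k)) (hOOnzd : ∀ k, NoZD (conjO k))
    (hXY : MemFC (L1 := L1) (L2 := L2) R sdivO σo nwarP σp X Y)
    (hdown : downOp R nwar σ f₀ = g₀) (hlt : chi X < g₀) : g₀ = fun _ => ⊤ := by
  by_cases hf : f₀ = fun _ => ⊥
  · rw [← hdown, hf, downOp_const_bot hMA]
  obtain ⟨a, ha⟩ := Function.ne_iff.mp hf
  obtain ⟨hle, b₁, hb₁⟩ := Pi.lt_def.mp hlt
  have hb₁X : b₁ ∉ X := fun h => not_top_lt ((chi_of_mem (L := L2) h).symm.trans_lt hb₁)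
  rw [chi_of_notMem hb₁X] at hb₁
  have : Nontrivial L1 := ⟨⟨_, _, ha⟩⟩
  have : Nontrivial L2 := ⟨⟨_, _, hb₁.ne⟩⟩
  have haY : a ∉ Y := fun haY => hb₁.ne' <| hdown ▸
    downOp_eq_bot_of_eq_bot hMA hMAnzd ha (hXY.rel_eq_bot_of_mem_of_notMem hOO hOOnzd haY hb₁X)
  obtain ⟨b₂, hb₂⟩ := Set.nonempty_iff_ne_empty.mpr hXY.1
  have hg₀b₂ : g₀ b₂ = ⊤ := top_le_iff.mp ((chi_of_mem (L := L2) hb₂).symm.trans_le (hle b₂))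
  exact absurd (hdown ▸ downOp_eq_bot_of_eq_bot hMA hMAnzd ha
    (hXY.rel_eq_bot_of_notMem_of_mem hPO hPOnzd haY hb₂)) (hg₀b₂ ▸ top_ne_bot)

lemma eq_chi_of_bot_lt (hMA : ∀ i, IsAdjointTriple (conj i) (sdiv i) (nwar i))
    (hMAnzd : ∀ i, NoZD (conj i))
    (hPO : ∀ j, IsAdjointTriple (conjP j) (sdivP j) (nwarP j)) (hPOnzd : ∀ j, NoZD (conjP j))
    (hOO : ∀ k, IsAdjointTriple (conjO k) (sdivO k) (nwarO k)) (hOOnzd : ∀ k, NoZD (conjO k))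
    (hXY : MemFC (L1 := L1) (L2 := L2) R sdivO σo nwarP σp X Y)
    (hup : upOp R sdiv σ g₀ = f₀) (hdown : downOp R nwar σ f₀ = g₀)
    (hlt : (fun _ => ⊥) < g₀) (hle : g₀ ≤ downOp R nwar σ (chi Y)) : f₀ = chi Y := by
  have hYf : chi Y ≤ f₀ := hup ▸ (le_upOp_iff_le_downOp hMA).mpr hle
  obtain ⟨-, b, hb⟩ := Pi.lt_def.mp hlt
  refine le_antisymm (fun a => ?_) hYf
  by_cases haY : a ∈ Y
  · exact le_top.trans_eq (chi_of_mem haY).symm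
  rw [chi_of_notMem haY, le_bot_iff]
  by_contra ha
  have : Nontrivial L1 := ⟨⟨_, _, ha⟩⟩
  have : Nontrivial L2 := ⟨⟨_, _, hb.ne⟩⟩
  obtain ⟨a₁, ha₁⟩ := Set.nonempty_iff_ne_empty.mpr hXY.2.2.1
  have hfa₁ : f₀ a₁ ≠ ⊥ :=
    ne_bot_of_le_ne_bot top_ne_bot ((chi_of_mem (L := L1) ha₁).symm.trans_le (hYf a₁))
  have hbX : b ∈ X := by
    by_contra hbX
    exact hb.ne' <| hdown ▸ downOp_eq_bot_of_eq_bot hMA hMAnzd hfa₁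
      (hXY.rel_eq_bot_of_mem_of_notMem hOO hOOnzd ha₁ hbX)
  exact ha <| hup ▸ upOp_eq_bot_of_eq_bot hMA hMAnzd hb.ne'
    (hXY.rel_eq_bot_of_notMem_of_mem hPO hPOnzd haY hbX)

end MemFC

theorem FC_pair_no_concept_between_general
    {A B : Type*}
    {L1 L2 P : Type*} [CompleteLattice L1] [CompleteLattice L2]
    [PartialOrder P] [BoundedOrder P]
    {ι ιp ιo : Type*}
    (conj : ι → L1 → L2 → P) (sdiv : ι → P → L2 → L1) (nwar : ι → P → L1 → L2)
    (hMA : ∀ i, IsAdjointTriple (conj i) (sdiv i) (nwar i))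
    (hMAnzd : ∀ i, NoZD (conj i))
    (conjP : ιp → P → L2 → L1) (sdivP : ιp → L1 → L2 → P) (nwarP : ιp → L1 → P → L2)
    (hPO : ∀ j, IsAdjointTriple (conjP j) (sdivP j) (nwarP j))
    (hPOnzd : ∀ j, NoZD (conjP j))
    (conjO : ιo → L1 → P → L2) (sdivO : ιo → L2 → P → L1) (nwarO : ιo → L2 → L1 → P)
    (hOO : ∀ k, IsAdjointTriple (conjO k) (sdivO k) (nwarO k))
    (hOOnzd : ∀ k, NoZD (conjO k))
    (R : A → B → P) (σ : A → B → ι) (σp : A → B → ιp) (σo : A → B → ιo)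
    (X : Set B) (Y : Set A)
    (hXY : MemFC (L1 := L1) (L2 := L2) R sdivO σo nwarP σp X Y) :
    (upOp R sdiv σ (chi X) ≠ (fun _ : A => (⊥ : L1)) →
      ¬∃ (g0 : B → L2) (f0 : A → L1),
        (upOp R sdiv σ g0 = f0 ∧ downOp R nwar σ f0 = g0) ∧
        (chi X : B → L2) < g0 ∧ g0 < (fun _ : B => (⊤ : L2))) ∧
    (downOp R nwar σ (chi Y) ≠ (fun _ : B => (⊥ : L2)) →
      ¬∃ (g0 : B → L2) (f0 : A → L1),
        (upOp R sdiv σ g0 = f0 ∧ downOp R nwar σ f0 = g0) ∧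
        (fun _ : B => (⊥ : L2)) < g0 ∧ g0 < downOp R nwar σ (chi Y)) := by
  refine ⟨fun _ ⟨g0, f0, ⟨_, hdown⟩, hlt, hlt_top⟩ => hlt_top.ne ?_,
    fun _ ⟨g0, f0, ⟨hup, hdown⟩, hlt, hlt_down⟩ => hlt_down.ne ?_⟩
  · exact hXY.eq_top_of_chi_lt hMA hMAnzd hPO hPOnzd hOO hOOnzd hdown hlt
  · rw [← hdown,
      hXY.eq_chi_of_bot_lt hMA hMAnzd hPO hPOnzd hOO hOOnzd hup hdown hlt hlt_down.le]

/-- For `(g, f) = (χ_X, χ_Y) ∈ FC`: if `g^↑ ≠ f_⊥`, there is no concept strictly between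
`⟨g, g^↑⟩` and the top concept `⟨g_⊤, f_⊥⟩`; dually, if `f^↓ ≠ g_⊥`, there is no concept
strictly between the bottom concept `⟨g_⊥, f_⊤⟩` and `⟨f^↓, f⟩`. -/
theorem FC_pair_no_concept_between
    {A B : Type*} [Nonempty A] [Nonempty B]
    {L1 L2 P : Type*} [CompleteLattice L1] [CompleteLattice L2]
    [PartialOrder P] [BoundedOrder P]
    {ι ιp ιo : Type*}
    (conj : ι → L1 → L2 → P) (sdiv : ι → P → L2 → L1) (nwar : ι → P → L1 → L2)
    (hMA : ∀ i, IsAdjointTriple (conj i) (sdiv i) (nwar i))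
    (hMAnzd : ∀ i, NoZD (conj i))
    (conjP : ιp → P → L2 → L1) (sdivP : ιp → L1 → L2 → P) (nwarP : ιp → L1 → P → L2)
    (hPO : ∀ j, IsAdjointTriple (conjP j) (sdivP j) (nwarP j))
    (hPOnzd : ∀ j, NoZD (conjP j))
    (conjO : ιo → L1 → P → L2) (sdivO : ιo → L2 → P → L1) (nwarO : ιo → L2 → L1 → P)
    (hOO : ∀ k, IsAdjointTriple (conjO k) (sdivO k) (nwarO k))
    (hOOnzd : ∀ k, NoZD (conjO k))
    (R : A → B → P) (σ : A → B → ι) (σp : A → B → ιp) (σo : A → B → ιo)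
    (hnorm : Normalized R)
    (X : Set B) (Y : Set A)
    (hXY : MemFC (L1 := L1) (L2 := L2) R sdivO σo nwarP σp X Y) :
    (upOp R sdiv σ (chi X) ≠ (fun _ : A => (⊥ : L1)) →
      ¬∃ (g0 : B → L2) (f0 : A → L1),
        (upOp R sdiv σ g0 = f0 ∧ downOp R nwar σ f0 = g0) ∧
        (chi X : B → L2) < g0 ∧ g0 < (fun _ : B => (⊤ : L2))) ∧
    (downOp R nwar σ (chi Y) ≠ (fun _ : B => (⊥ : L2)) →
      ¬∃ (g0 : B → L2) (f0 : A → L1),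
        (upOp R sdiv σ g0 = f0 ∧ downOp R nwar σ f0 = g0) ∧
        (fun _ : B => (⊥ : L2)) < g0 ∧ g0 < downOp R nwar σ (chi Y)) :=
  FC_pair_no_concept_between_general conj sdiv nwar hMA hMAnzd conjP sdivP nwarP hPO hPOnzd conjO
    sdivO nwarO hOO hOOnzd R σ σp σo X Y hXY
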